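/- Let B be a graph in 𝓑_1 with root vertex v_1 (of degree 1 in B), let w_2 be a vertex of degree 2 in B different from v_1, and let T be the graph obtained from B by adding a new vertex v_2 together with the two edges v_1 v_2 and v_2 w_2. Then i(T) = i(B). -/

import Mathlib

namespace PaperIndepDom

open SimpleGraph

/-- The degree of a vertex `v` in a graph `G`. -/
noncomputable def deg {V : Type*} (G : SimpleGraph V) (v : V) : ℕ :=
  (G.neighborSet v).ncard

/-- A set `S` is an independent dominating set of `G`. -/
def IsIDSet {V : Type*} (G : SimpleGraph V) (S : Set V) : Prop :=
  (∀ u ∈ S, ∀ v ∈ S, ¬ G.Adj u v) ∧ ∀ v, v ∉ S → ∃ u ∈ S, G.Adj u v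

/-- The independent domination number `i(G)`. -/
noncomputable def iNum {V : Type*} (G : SimpleGraph V) : ℕ :=
  sInf {n | ∃ S : Set V, IsIDSet G S ∧ S.ncard = n}

/-- The base graph `B₁`: a copy of `K_{2,3}` (vertices `0, 1` forming the partite set of
size 2, vertices `2, 3, 4` forming the partite set of size 3) together with a new root
vertex `5` joined to the degree-2 vertex `2`. -/
def baseGraph : SimpleGraph (Fin 6) :=
  SimpleGraph.fromRel (fun i j =>
    (i.val ≤ 1 ∧ 2 ≤ j.val ∧ j.val ≤ 4) ∨ (i = 2 ∧ j = 5))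

/-- The graph obtained from `G` by adding a vertex-disjoint copy of `K_{2,3}`
(on the vertex set `Fin 2 ⊕ Fin 3`) together with an edge joining the vertex `v'` of `G`
to the degree-2 vertex `Sum.inr t` of the added copy of `K_{2,3}` (operation `O₁`). -/
def addK23 {V : Type*} (G : SimpleGraph V) (v' : V) (t : Fin 3) :
    SimpleGraph (V ⊕ (Fin 2 ⊕ Fin 3)) :=
  SimpleGraph.fromRel (fun x y =>
    (∃ a b, G.Adj a b ∧ x = Sum.inl a ∧ y = Sum.inl b) ∨
    (∃ i j, x = Sum.inr (Sum.inl i) ∧ y = Sum.inr (Sum.inr j)) ∨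
    (x = Sum.inl v' ∧ y = Sum.inr (Sum.inr t)))

/-- `FamilyBRoot G r` means that `G` belongs to the family `𝓑` (the smallest family of
graphs, closed under isomorphism, containing the base graph and closed under the
operation `O₁`) and `r` is the root of `G`. -/
inductive FamilyBRoot : ∀ {V : Type}, SimpleGraph V → V → Prop
  | base : FamilyBRoot baseGraph 5
  | extend {V : Type} {G : SimpleGraph V} {r : V} (hG : FamilyBRoot G r) (v' : V)
      (hv' : deg G v' ≤ 2) (t : Fin 3) : FamilyBRoot (addK23 G v' t) (Sum.inl r)
  | iso {V W : Type} {G : SimpleGraph V} {H : SimpleGraph W} {r : V}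
      (e : G ≃g H) (hG : FamilyBRoot G r) : FamilyBRoot H (e r)

/-- The graph obtained from `B` by adding a new vertex `v₂` (namely `Sum.inr ()`)
together with the two edges `v₁v₂` and `v₂w₂`. -/
def addLink {V : Type*} (B : SimpleGraph V) (v1 w2 : V) : SimpleGraph (V ⊕ Unit) :=
  SimpleGraph.fromRel (fun x y =>
    (∃ a b, B.Adj a b ∧ x = Sum.inl a ∧ y = Sum.inl b) ∨
    (x = Sum.inl v1 ∧ y = Sum.inr ()) ∨
    (x = Sum.inl w2 ∧ y = Sum.inr ()))

/-!
A graph of `𝓑` built from `k` copies of `K_{2,3}` has `i = 2k + 1`, witnessed by the root together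
with the part of size 2 of every copy. The lower bound is proved by induction along `O₁`, viewing
the base graph as `O₁` applied to a single vertex, together with two relaxations: an independent
set dominating every vertex except possibly the root has at least `2k` vertices, and at least
`2k + 1` as soon as it dominates the root or contains a vertex of degree at most 2. A new copy of
`K_{2,3}` costs such a set at least two vertices: its part of size 2, or the two vertices of
degree 2 in its part of size 3.

In `T`, a minimum independent dominating set of `B` through the root is still independent and
dominating. Conversely, an independent dominating set of `T` containing `v₂` restricts to a set
dominating `B` except possibly `v₁` and `w₂`; adding `w₂` if it is undominated yields a set
containing a vertex of degree 2, so the restriction has at least `2k` vertices.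
-/

lemma ncard_preimage_inl_add_ncard_preimage_inr {α β : Type*} [Finite α] [Finite β]
    (s : Set (α ⊕ β)) : (Sum.inl ⁻¹' s).ncard + (Sum.inr ⁻¹' s).ncard = s.ncard := by
  conv_rhs => rw [← Set.image_preimage_inl_union_image_preimage_inr s]
  rw [Set.ncard_union_eq Set.disjoint_image_inl_image_inr,
    Set.ncard_image_of_injective _ Sum.inl_injective,
    Set.ncard_image_of_injective _ Sum.inr_injective]

section Domination

variable {V W : Type*} {G : SimpleGraph V} {H : SimpleGraph W}

def Dominates (G : SimpleGraph V) (D : Set V) (x : V) : Prop :=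
  x ∈ D ∨ ∃ y ∈ D, G.Adj y x

lemma isIDSet_iff {S : Set V} : IsIDSet G S ↔ G.IsIndepSet S ∧ ∀ x, Dominates G S x := by
  refine and_congr ⟨fun h u hu v hv _ => h u hu v hv, fun h u hu v hv huv => ?_⟩
    (forall_congr' fun x => by rw [Dominates, or_iff_not_imp_left])
  exact h hu hv (G.ne_of_adj huv) huv

lemma Dominates.mono {D E : Set V} {x : V} (h : Dominates G D x) (hDE : D ⊆ E) :
    Dominates G E x :=
  h.imp (@hDE x) fun ⟨y, hy, hyx⟩ => ⟨y, hDE hy, hyx⟩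

lemma Dominates.map (f : G →g H) {D : Set W} {x : V} (h : Dominates G (f ⁻¹' D) x) :
    Dominates H D (f x) :=
  h.imp id fun ⟨y, hy, hyx⟩ => ⟨f y, hy, f.map_adj hyx⟩

lemma dominates_iso_iff (e : G ≃g H) {D : Set W} {x : V} :
    Dominates H D (e x) ↔ Dominates G (e ⁻¹' D) x := by
  refine ⟨fun h => h.imp id fun ⟨y, hy, hyx⟩ => ⟨e.symm y, ?_, ?_⟩, Dominates.map e.toHom⟩
  · simpa using hy
  · simpa using e.symm.map_adj_iff.2 hyx

lemma isIndepSet_preimage (f : G →g H) (hf : Function.Injective f) {D : Set W}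
    (h : H.IsIndepSet D) : G.IsIndepSet (f ⁻¹' D) :=
  fun _ ha _ hb hab hadj => h ha hb (hf.ne hab) (f.map_adj hadj)

lemma isIndepSet_insert_of_not_dominates {D : Set V} (h : G.IsIndepSet D) {w : V}
    (hw : ¬ Dominates G D w) : G.IsIndepSet (insert w D) := by
  simp only [Dominates, not_or, not_exists, not_and] at hw
  refine h.insert fun y hy _ => ⟨fun hwy => hw.2 y hy hwy.symm, hw.2 y hy⟩

lemma ncard_preimage_iso (e : G ≃g H) (D : Set W) : (e ⁻¹' D).ncard = D.ncard :=
  Set.ncard_preimage_of_injective_subset_range e.injective (by simp [e.surjective.range_eq])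

lemma deg_iso (e : G ≃g H) (v : V) : deg H (e v) = deg G v := by
  rw [deg, deg, ← Nat.card_coe_set_eq, ← Nat.card_coe_set_eq]
  exact Nat.card_congr (e.mapNeighborSet v).symm

end Domination

section Adjacency

variable {V : Type*} {G : SimpleGraph V} {v' : V} {t : Fin 3} {a b : V}

@[simp] lemma addK23_adj_inl_inl : (addK23 G v' t).Adj (.inl a) (.inl b) ↔ G.Adj a b := by
  simp only [addK23, fromRel_adj]
  aesop (add safe forward SimpleGraph.Adj.symm)

@[simp] lemma addK23_adj_inl_inr {z : Fin 2 ⊕ Fin 3} :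
    (addK23 G v' t).Adj (.inl a) (.inr z) ↔ a = v' ∧ z = .inr t := by
  simp only [addK23, fromRel_adj]
  aesop

@[simp] lemma addK23_adj_inr_inl {z : Fin 2 ⊕ Fin 3} :
    (addK23 G v' t).Adj (.inr z) (.inl a) ↔ a = v' ∧ z = .inr t := by
  rw [adj_comm, addK23_adj_inl_inr]

@[simp] lemma addK23_adj_inr_inr {z z' : Fin 2 ⊕ Fin 3} :
    (addK23 G v' t).Adj (.inr z) (.inr z') ↔ z.isLeft ≠ z'.isLeft := by
  simp only [addK23, fromRel_adj]
  rcases z with i | j <;> rcases z' with i' | j' <;> simp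

variable {B : SimpleGraph V} {v1 w2 : V} {u : Unit}

@[simp] lemma addLink_adj_inl_inl : (addLink B v1 w2).Adj (.inl a) (.inl b) ↔ B.Adj a b := by
  simp only [addLink, fromRel_adj]
  aesop (add safe forward SimpleGraph.Adj.symm)

@[simp] lemma addLink_adj_inl_inr : (addLink B v1 w2).Adj (.inl a) (.inr u) ↔ a = v1 ∨ a = w2 := by
  simp only [addLink, fromRel_adj]
  aesop

@[simp] lemma addLink_adj_inr_inl : (addLink B v1 w2).Adj (.inr u) (.inl a) ↔ a = v1 ∨ a = w2 := by
  rw [adj_comm, addLink_adj_inl_inr]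

@[simp] lemma addLink_adj_inr_inr {u' : Unit} : ¬ (addLink B v1 w2).Adj (.inr u) (.inr u') := by
  simp [addLink]

end Adjacency

section Attachments

variable {V : Type*} {G : SimpleGraph V} {v' x : V} {t : Fin 3}

lemma dominates_addK23_inl {D : Set (V ⊕ (Fin 2 ⊕ Fin 3))} :
    Dominates (addK23 G v' t) D (.inl x) ↔
      Dominates G (Sum.inl ⁻¹' D) x ∨ (x = v' ∧ .inr (.inr t) ∈ D) := by
  simp only [Dominates, Sum.exists, Set.mem_preimage, addK23_adj_inl_inl, addK23_adj_inr_inl]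
  aesop

lemma dominates_addK23_inr_inl {D : Set (V ⊕ (Fin 2 ⊕ Fin 3))} {i : Fin 2} :
    Dominates (addK23 G v' t) D (.inr (.inl i)) ↔ .inr (.inl i) ∈ D ∨ ∃ j, .inr (.inr j) ∈ D := by
  simp [Dominates, Sum.exists]

lemma dominates_addK23_inr_inr {D : Set (V ⊕ (Fin 2 ⊕ Fin 3))} {j : Fin 3} :
    Dominates (addK23 G v' t) D (.inr (.inr j)) ↔
      .inr (.inr j) ∈ D ∨ (∃ i, .inr (.inl i) ∈ D) ∨ (j = t ∧ .inl v' ∈ D) := by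
  simp only [Dominates, Sum.exists, addK23_adj_inl_inr, addK23_adj_inr_inr]
  aesop

lemma deg_le_deg_addK23_inl [Finite V] : deg G x ≤ deg (addK23 G v' t) (.inl x) := by
  rw [deg, deg, ← Set.ncard_image_of_injective _ Sum.inl_injective]
  exact Set.ncard_le_ncard fun y => by aesop

lemma two_lt_deg_addK23_inr_inl [Finite V] {i : Fin 2} :
    2 < deg (addK23 G v' t) (.inr (.inl i)) := by
  have hX : Set.range (Sum.inr ∘ Sum.inr : Fin 3 → V ⊕ (Fin 2 ⊕ Fin 3)) ⊆
      (addK23 G v' t).neighborSet (.inr (.inl i)) := by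
    rintro _ ⟨j, rfl⟩
    simp
  have := Set.ncard_le_ncard hX
  rwa [Set.ncard_range_of_injective (Sum.inr_injective.comp Sum.inr_injective),
    Nat.card_eq_fintype_card, Fintype.card_fin] at this

lemma isIDSet_addK23 {S : Set V} (hS : IsIDSet G S) :
    IsIDSet (addK23 G v' t) (Sum.inl '' S ∪ Set.range (Sum.inr ∘ Sum.inl)) := by
  rw [isIDSet_iff] at hS ⊢
  refine ⟨?_, ?_⟩
  · rintro _ (⟨a, ha, rfl⟩ | ⟨i, rfl⟩) _ (⟨b, hb, rfl⟩ | ⟨i', rfl⟩) hne <;> simp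
    exact hS.1 ha hb (by rintro rfl; exact hne rfl)
  · rintro (x | i | j)
    · exact dominates_addK23_inl.2 (.inl ((hS.2 x).mono fun y hy => .inl ⟨y, hy, rfl⟩))
    · exact .inl (.inr ⟨i, rfl⟩)
    · exact .inr ⟨.inr (.inl 0), .inr ⟨0, rfl⟩, by simp⟩

lemma ncard_image_inl_union_range_inr_inl [Finite V] (S : Set V) :
    (Sum.inl '' S ∪ Set.range (Sum.inr ∘ Sum.inl) : Set (V ⊕ (Fin 2 ⊕ Fin 3))).ncard =
      S.ncard + 2 := by
  rw [Set.ncard_union_eq, Set.ncard_image_of_injective _ Sum.inl_injective,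
    Set.ncard_range_of_injective (Sum.inr_injective.comp Sum.inl_injective)]
  · simp
  · rw [Set.disjoint_left]
    rintro _ ⟨a, -, rfl⟩ ⟨i, hi⟩
    simp at hi

lemma ncard_split_addK23 [Finite V] (D : Set (V ⊕ (Fin 2 ⊕ Fin 3))) :
    (Sum.inl ⁻¹' D).ncard + (Sum.inl ⁻¹' (Sum.inr ⁻¹' D)).ncard +
      (Sum.inr ⁻¹' (Sum.inr ⁻¹' D)).ncard = D.ncard := by
  rw [add_assoc, ncard_preimage_inl_add_ncard_preimage_inr,
    ncard_preimage_inl_add_ncard_preimage_inr]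

variable {B : SimpleGraph V} {v1 w2 : V}

lemma dominates_addLink_inl {S : Set (V ⊕ Unit)} :
    Dominates (addLink B v1 w2) S (.inl x) ↔
      Dominates B (Sum.inl ⁻¹' S) x ∨ ((x = v1 ∨ x = w2) ∧ .inr () ∈ S) := by
  simp only [Dominates, Sum.exists, Set.mem_preimage, addLink_adj_inl_inl, addLink_adj_inr_inl]
  aesop

lemma isIDSet_addLink {r : V} {S : Set V} (hS : IsIDSet B S) (hr : r ∈ S) :
    IsIDSet (addLink B r w2) (Sum.inl '' S) := by
  rw [isIDSet_iff] at hS ⊢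
  refine ⟨?_, ?_⟩
  · rintro _ ⟨a, ha, rfl⟩ _ ⟨b, hb, rfl⟩ hne
    simpa using hS.1 ha hb (by rintro rfl; exact hne rfl)
  · rintro (x | ⟨⟩)
    · refine dominates_addLink_inl.2 (.inl ?_)
      rw [Set.preimage_image_eq S Sum.inl_injective]
      exact hS.2 x
    · exact .inr ⟨.inl r, ⟨r, hr, rfl⟩, by simp⟩

end Attachments

lemma iNum_eq_of_isIDSet {V : Type*} {G : SimpleGraph V} {S : Set V} (hS : IsIDSet G S)
    (hmin : ∀ S', IsIDSet G S' → S.ncard ≤ S'.ncard) : iNum G = S.ncard :=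
  le_antisymm (Nat.sInf_le ⟨S, hS, rfl⟩)
    (le_csInf ⟨_, S, hS, rfl⟩ fun _ ⟨S', hS', h⟩ => h ▸ hmin S' hS')

/-- The data carried through the induction along `O₁`; `n` is `i(G)`
(`RootedIDProfile.iNum_eq`). -/
structure RootedIDProfile {V : Type*} (G : SimpleGraph V) (r : V) (n : ℕ) : Prop where
  finite : Finite V
  exists_isIDSet : ∃ S, IsIDSet G S ∧ r ∈ S ∧ S.ncard = n
  le_ncard_add_one : ∀ D, G.IsIndepSet D → (∀ x ≠ r, Dominates G D x) → n ≤ D.ncard + 1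
  le_ncard : ∀ D, G.IsIndepSet D → (∀ x ≠ r, Dominates G D x) →
    (Dominates G D r ∨ ∃ p ∈ D, deg G p ≤ 2) → n ≤ D.ncard

namespace RootedIDProfile

variable {V W : Type*} {G : SimpleGraph V} {H : SimpleGraph W} {r : V} {n : ℕ}

lemma iNum_eq (h : RootedIDProfile G r n) : iNum G = n := by
  obtain ⟨S, hS, -, rfl⟩ := h.exists_isIDSet
  refine iNum_eq_of_isIDSet hS fun S' hS' => ?_
  rw [isIDSet_iff] at hS'
  exact h.le_ncard S' hS'.1 (fun x _ => hS'.2 x) (.inl (hS'.2 r))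

lemma le_ncard_add_one_of_forall_ne (h : RootedIDProfile G r n) {D : Set V}
    (hD : G.IsIndepSet D) {w : V} (hw : deg G w ≤ 2)
    (hdom : ∀ x ≠ r, x ≠ w → Dominates G D x) : n ≤ D.ncard + 1 := by
  by_cases hwD : Dominates G D w
  · refine h.le_ncard_add_one D hD fun x hx => ?_
    obtain rfl | hxw := eq_or_ne x w
    exacts [hwD, hdom x hx hxw]
  · have hdom' : ∀ x ≠ r, Dominates G (insert w D) x := fun x hx => by
      obtain rfl | hxw := eq_or_ne x w
      exacts [.inl (Set.mem_insert x D), (hdom x hx hxw).mono (Set.subset_insert w D)]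
    calc n ≤ (insert w D).ncard :=
          h.le_ncard _ (isIndepSet_insert_of_not_dominates hD hwD) hdom'
            (.inr ⟨w, Set.mem_insert w D, hw⟩)
      _ ≤ D.ncard + 1 := Set.ncard_insert_le w D

lemma map (h : RootedIDProfile G r n) (e : G ≃g H) : RootedIDProfile H (e r) n := by
  have hdom {D : Set W} (hdom : ∀ x ≠ e r, Dominates H D x) :
      ∀ x ≠ r, Dominates G (e ⁻¹' D) x := fun x hx =>
    (dominates_iso_iff e).1 (hdom (e x) (e.injective.ne hx))
  refine ⟨have := h.finite; .of_equiv _ e.toEquiv, ?_, fun D hD hD' => ?_, fun D hD hD' hanch => ?_⟩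
  · obtain ⟨S, hS, hr, rfl⟩ := h.exists_isIDSet
    rw [isIDSet_iff] at hS
    refine ⟨e.symm ⁻¹' S, ?_, by simpa using hr, ncard_preimage_iso e.symm S⟩
    exact isIDSet_iff.2 ⟨isIndepSet_preimage e.symm.toHom e.symm.injective hS.1,
      fun y => (dominates_iso_iff e.symm).1 (hS.2 _)⟩
  · rw [← ncard_preimage_iso e D]
    exact h.le_ncard_add_one _ (isIndepSet_preimage e.toHom e.injective hD) (hdom hD')
  · rw [← ncard_preimage_iso e D]
    refine h.le_ncard _ (isIndepSet_preimage e.toHom e.injective hD) (hdom hD') ?_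
    refine hanch.imp (dominates_iso_iff e).1 fun ⟨p, hp, hpdeg⟩ => ⟨e.symm p, by simpa using hp, ?_⟩
    rwa [← deg_iso e, e.apply_symm_apply]

end RootedIDProfile

namespace RootedIDProfile

variable {V : Type*} {G : SimpleGraph V} {r v' : V} {n : ℕ} {t : Fin 3}
  {D : Set (V ⊕ (Fin 2 ⊕ Fin 3))}

lemma le_ncard_addK23_of_inr_inl_notMem (h : RootedIDProfile G r n) (hv' : deg G v' ≤ 2)
    (hD : (addK23 G v' t).IsIndepSet D) (hdom : ∀ x ≠ .inl r, Dominates (addK23 G v' t) D x)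
    (hA : ∀ i, .inr (.inl i) ∉ D) : n + 2 ≤ D.ncard := by
  have := h.finite
  have hD₀ : G.IsIndepSet (Sum.inl ⁻¹' D) :=
    isIndepSet_preimage ⟨Sum.inl, addK23_adj_inl_inl.2⟩ Sum.inl_injective hD
  have hdom₀ (x : V) (hx : x ≠ r) := dominates_addK23_inl.1 (hdom (.inl x) (by simpa using hx))
  have hX (j : Fin 3) (hj : j ≠ t) : .inr (.inr j) ∈ D := by
    simpa [hA, hj] using dominates_addK23_inr_inr.1 (hdom (.inr (.inr j)) (by simp))
  rw [← ncard_split_addK23 D]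
  by_cases ht : .inr (.inr t) ∈ D
  · have hX3 : Sum.inr ⁻¹' (Sum.inr ⁻¹' D) = Set.univ := by
      ext j
      obtain rfl | hj := eq_or_ne j t
      exacts [iff_of_true ht trivial, iff_of_true (hX j hj) trivial]
    have := h.le_ncard_add_one_of_forall_ne hD₀ hv' fun x hx hxv =>
      (hdom₀ x hx).resolve_right fun h => hxv h.1
    simp only [hX3, Set.ncard_univ, Nat.card_eq_fintype_card, Fintype.card_fin] at this ⊢
    omega
  · have hv'D : v' ∈ Sum.inl ⁻¹' D := by
      simpa [hA, ht] using dominates_addK23_inr_inr.1 (hdom (.inr (.inr t)) (by simp))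
    have hX2 : 2 ≤ (Sum.inr ⁻¹' (Sum.inr ⁻¹' D)).ncard := by
      calc 2 = ({t}ᶜ : Set (Fin 3)).ncard := by rw [Set.ncard_compl]; simp
        _ ≤ _ := Set.ncard_le_ncard fun j hj => hX j hj
    have := h.le_ncard _ hD₀ (fun x hx => (hdom₀ x hx).resolve_right fun h => ht h.2)
      (.inr ⟨v', hv'D, hv'⟩)
    omega

lemma bounds_addK23_of_inr_inl_mem (h : RootedIDProfile G r n)
    (hD : (addK23 G v' t).IsIndepSet D) (hdom : ∀ x ≠ .inl r, Dominates (addK23 G v' t) D x)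
    {i : Fin 2} (hi : .inr (.inl i) ∈ D) :
    n + 2 ≤ D.ncard + 1 ∧ ((Dominates (addK23 G v' t) D (.inl r) ∨
      ∃ p ∈ D, deg (addK23 G v' t) p ≤ 2) → n + 2 ≤ D.ncard) := by
  have := h.finite
  have hD₀ : G.IsIndepSet (Sum.inl ⁻¹' D) :=
    isIndepSet_preimage ⟨Sum.inl, addK23_adj_inl_inl.2⟩ Sum.inl_injective hD
  have hX (j : Fin 3) : .inr (.inr j) ∉ D := fun hj => hD hi hj (by simp) (by simp)
  have hA : Sum.inl ⁻¹' (Sum.inr ⁻¹' D) = Set.univ := by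
    ext i'
    simpa [hX] using dominates_addK23_inr_inl.1 (hdom (.inr (.inl i')) (by simp))
  have hdom₀ (x : V) (hx : x ≠ r) : Dominates G (Sum.inl ⁻¹' D) x :=
    (dominates_addK23_inl.1 (hdom (.inl x) (by simpa using hx))).resolve_right fun h => hX t h.2
  have hcard : (Sum.inl ⁻¹' D).ncard + 2 ≤ D.ncard := by
    rw [← ncard_split_addK23 D, hA, Set.ncard_univ, Nat.card_eq_fintype_card, Fintype.card_fin]
    omega
  refine ⟨by linarith [h.le_ncard_add_one _ hD₀ hdom₀], fun hanch => ?_⟩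
  suffices Dominates G (Sum.inl ⁻¹' D) r ∨ ∃ p ∈ Sum.inl ⁻¹' D, deg G p ≤ 2 by
    linarith [h.le_ncard _ hD₀ hdom₀ this]
  rcases hanch with hr | ⟨q | i' | j, hp, hpdeg⟩
  · exact .inl ((dominates_addK23_inl.1 hr).resolve_right fun h => hX t h.2)
  · exact .inr ⟨q, hp, deg_le_deg_addK23_inl.trans hpdeg⟩
  · exact absurd hpdeg two_lt_deg_addK23_inr_inl.not_ge
  · exact absurd hp (hX j)

lemma bounds_addK23 (h : RootedIDProfile G r n) (hv' : deg G v' ≤ 2)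
    (hD : (addK23 G v' t).IsIndepSet D) (hdom : ∀ x ≠ .inl r, Dominates (addK23 G v' t) D x) :
    n + 2 ≤ D.ncard + 1 ∧ ((Dominates (addK23 G v' t) D (.inl r) ∨
      ∃ p ∈ D, deg (addK23 G v' t) p ≤ 2) → n + 2 ≤ D.ncard) := by
  by_cases hA : ∃ i, .inr (.inl i) ∈ D
  · obtain ⟨i, hi⟩ := hA
    exact h.bounds_addK23_of_inr_inl_mem hD hdom hi
  · have := h.le_ncard_addK23_of_inr_inl_notMem hv' hD hdom (not_exists.1 hA)
    exact ⟨by omega, fun _ => this⟩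

lemma addK23 (h : RootedIDProfile G r n) (hv' : deg G v' ≤ 2) (t : Fin 3) :
    RootedIDProfile (addK23 G v' t) (.inl r) (n + 2) := by
  have := h.finite
  refine ⟨inferInstance, ?_, fun D hD hdom => (h.bounds_addK23 hv' hD hdom).1,
    fun D hD hdom => (h.bounds_addK23 hv' hD hdom).2⟩
  obtain ⟨S, hS, hr, rfl⟩ := h.exists_isIDSet
  exact ⟨_, isIDSet_addK23 hS, .inl ⟨r, hr, rfl⟩, ncard_image_inl_union_range_inr_inl S⟩

end RootedIDProfile

lemma rootedIDProfile_bot : RootedIDProfile (⊥ : SimpleGraph Unit) () 1 where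
  finite := inferInstance
  exists_isIDSet := ⟨Set.univ, ⟨by simp, by simp⟩, trivial, by simp⟩
  le_ncard_add_one _ _ _ := by omega
  le_ncard D _ _ hanch := by
    refine (Set.ncard_pos (Set.toFinite D)).2 ?_
    rcases hanch with (h | ⟨y, hy, -⟩) | ⟨y, hy, -⟩
    exacts [⟨_, h⟩, ⟨y, hy⟩, ⟨y, hy⟩]

def baseGraphIso : baseGraph ≃g addK23 (⊥ : SimpleGraph Unit) () 0 where
  toFun := ![.inr (.inl 0), .inr (.inl 1), .inr (.inr 0), .inr (.inr 1), .inr (.inr 2), .inl ()]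
  invFun := Sum.elim (fun _ => 5) (Sum.elim ![0, 1] ![2, 3, 4])
  left_inv := by decide
  right_inv := by decide
  map_rel_iff' := by
    intro a b
    fin_cases a <;> fin_cases b <;> simp [baseGraph]

lemma FamilyBRoot.exists_rootedIDProfile {V : Type} {G : SimpleGraph V} {r : V}
    (h : FamilyBRoot G r) : ∃ n, RootedIDProfile G r n := by
  induction h with
  | base => exact ⟨_, (rootedIDProfile_bot.addK23 (by simp [deg]) 0).map baseGraphIso.symm⟩
  | extend _ v' hv' t ih =>
    obtain ⟨n, hn⟩ := ih
    exact ⟨n + 2, hn.addK23 hv' t⟩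
  | iso e _ ih => exact ih.imp fun n hn => hn.map e

namespace RootedIDProfile

variable {V : Type*} {B : SimpleGraph V} {r w : V} {n : ℕ}

lemma le_ncard_of_isIDSet_addLink (h : RootedIDProfile B r n) (hw : deg B w ≤ 2)
    {S : Set (V ⊕ Unit)} (hS : IsIDSet (addLink B r w) S) : n ≤ S.ncard := by
  have := h.finite
  rw [isIDSet_iff] at hS
  have hD : B.IsIndepSet (Sum.inl ⁻¹' S) :=
    isIndepSet_preimage ⟨Sum.inl, addLink_adj_inl_inl.2⟩ Sum.inl_injective hS.1
  have hdom (x : V) := dominates_addLink_inl.1 (hS.2 (.inl x))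
  rw [← ncard_preimage_inl_add_ncard_preimage_inr S]
  by_cases hv₂ : .inr () ∈ S
  · have := h.le_ncard_add_one_of_forall_ne hD hw fun x hxr hxw =>
      (hdom x).resolve_right fun h => h.1.elim hxr hxw
    have : 0 < (Sum.inr ⁻¹' S).ncard := (Set.ncard_pos (Set.toFinite _)).2 ⟨(), hv₂⟩
    omega
  · have hdom' (x : V) := (hdom x).resolve_right fun h => hv₂ h.2
    exact (h.le_ncard _ hD (fun x _ => hdom' x) (.inl (hdom' r))).trans (Nat.le_add_right _ _)

lemma iNum_addLink (h : RootedIDProfile B r n) (hw : deg B w ≤ 2) :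
    iNum (addLink B r w) = n := by
  have := h.finite
  obtain ⟨S, hS, hr, rfl⟩ := h.exists_isIDSet
  rw [← Set.ncard_image_of_injective S Sum.inl_injective]
  exact iNum_eq_of_isIDSet (isIDSet_addLink hS hr) fun S' hS' => by
    simpa [Set.ncard_image_of_injective S Sum.inl_injective] using
      h.le_ncard_of_isIDSet_addLink hw hS'

end RootedIDProfile

theorem statement14_general {V : Type} (B : SimpleGraph V) (v1 : V) (hroot : FamilyBRoot B v1)
    (w2 : V) (hdeg2 : deg B w2 = 2)
    (T : SimpleGraph (V ⊕ Unit)) (hT : T = addLink B v1 w2) :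
    iNum T = iNum B := by
  obtain ⟨n, hn⟩ := hroot.exists_rootedIDProfile
  rw [hT, hn.iNum_addLink hdeg2.le, hn.iNum_eq]

/-- Let `B ∈ 𝓑₁` have root `v₁` (of degree 1 in `B`), let `w₂ ≠ v₁`
be a vertex of degree 2 in `B`, and let `T` be obtained from `B` by adding a new vertex
`v₂` and the two edges `v₁v₂` and `v₂w₂`. Then `i(T) = i(B)`. -/
theorem statement14 {V : Type} (B : SimpleGraph V) (v1 : V) (hroot : FamilyBRoot B v1)
    (hdeg1 : deg B v1 = 1) (w2 : V) (hne : w2 ≠ v1) (hdeg2 : deg B w2 = 2)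
    (T : SimpleGraph (V ⊕ Unit)) (hT : T = addLink B v1 w2) :
    iNum T = iNum B :=
  statement14_general B v1 hroot w2 hdeg2 T hT

end PaperIndepDom
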